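/- arXiv:2505.01229 — 4 statements merged into one kernel-verified Lean document; each statement's English description precedes it below -/
import Mathlib

section
/- Let A₁,…,A_m be d×d real matrices sharing a common proper invariant cone K, and suppose the family is irreducible (no common nontrivial invariant subspace). If v ∈ ∂K is a nonzero eigenvector of the mean matrix Ā = (1/m)∑A_i, and Γ is the minimal face of K containing v, then A_i Γ ⊆ Γ for every i. -/
open Matrix Set

def IsProperCone {d : ℕ} (K : Set (Fin d → ℝ)) : Prop :=
  IsClosed K ∧ Convex ℝ K ∧ (∀ x ∈ K, ∀ t : ℝ, 0 ≤ t → t • x ∈ K) ∧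
    K ∩ (-K) = {0} ∧ (interior K).Nonempty

/-- `K` is a proper cone invariant for every matrix in the family. -/
def IsInvariantCone {d m : ℕ} (𝒜 : Fin m → Matrix (Fin d) (Fin d) ℝ)
    (K : Set (Fin d → ℝ)) : Prop :=
  IsProperCone K ∧ ∀ i, ∀ x ∈ K, (𝒜 i).mulVec x ∈ K

/-- The family has no common nontrivial invariant subspace. -/
def IsIrreducibleFamily {d m : ℕ} (𝒜 : Fin m → Matrix (Fin d) (Fin d) ℝ) : Prop :=
  ∀ V : Submodule ℝ (Fin d → ℝ), (∀ i, ∀ x ∈ V, (𝒜 i).mulVec x ∈ V) → V = ⊥ ∨ V = ⊤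

/-- A face of the cone `K`: a subcone `Γ` such that `x + y ∈ Γ` with `x, y ∈ K`
implies `x, y ∈ Γ`. -/
def IsFace {d : ℕ} (K Γ : Set (Fin d → ℝ)) : Prop :=
  Γ ⊆ K ∧ (∀ x ∈ Γ, ∀ t : ℝ, 0 ≤ t → t • x ∈ Γ) ∧ (∀ x ∈ Γ, ∀ y ∈ Γ, x + y ∈ Γ) ∧
    ∀ x ∈ K, ∀ y ∈ K, x + y ∈ Γ → x ∈ Γ ∧ y ∈ Γ

/-!
The minimal face of `v` is `Φ(v) = {x ∈ K | x ≤_K t • v for some t ≥ 0}`, the order being the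
one defined by `K`. A linear map `A` with `A K ⊆ K` and `A v ≤_K s • v` preserves `Φ(v)`, since
`x ≤_K t • v` gives `A x ≤_K t • A v ≤_K (t * s) • v`. For the family, `∑ Aᵢ v = (m * λ) • v`
lies in `K` and is a multiple of `v`, hence lies in the face `Φ(v)` (for `m * λ < 0` because
its sum with `-(m * λ) • v ∈ Φ(v)` is `0`); a face containing a sum of points of `K` contains
every summand, so each `Aᵢ v` lies in `Φ(v)`.
-/

namespace PointedCone

variable {R M : Type*} [Field R] [LinearOrder R] [IsStrictOrderedRing R]
  [AddCommGroup M] [Module R M]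

def ofSet (S : Set M) (hne : S.Nonempty) (hadd : ∀ x ∈ S, ∀ y ∈ S, x + y ∈ S)
    (hsmul : ∀ x ∈ S, ∀ t : R, 0 ≤ t → t • x ∈ S) : PointedCone R M where
  carrier := S
  add_mem' hx hy := hadd _ hx _ hy
  zero_mem' := by
    obtain ⟨x, hx⟩ := hne
    simpa using hsmul x hx 0 le_rfl
  smul_mem' c _ hx := hsmul _ hx c c.2

def minFace (C : PointedCone R M) (v : M) : PointedCone R M where
  carrier := {x | x ∈ C ∧ ∃ t : R, 0 ≤ t ∧ t • v - x ∈ C}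
  add_mem' := by
    rintro x y ⟨hx, s, hs, hsx⟩ ⟨hy, t, ht, hty⟩
    refine ⟨C.add_mem hx hy, s + t, add_nonneg hs ht, ?_⟩
    convert C.add_mem hsx hty using 1
    rw [add_smul]; abel
  zero_mem' := ⟨C.zero_mem, 0, le_rfl, by simp⟩
  smul_mem' := by
    rintro ⟨c, hc⟩ x ⟨hx, t, ht, htx⟩
    refine ⟨C.smul_mem hc hx, c * t, mul_nonneg hc ht, ?_⟩
    convert C.smul_mem hc htx using 1
    simp [smul_sub, smul_smul]

variable {C F : PointedCone R M} {v : M}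

lemma mem_minFace_self (hv : v ∈ C) : v ∈ minFace C v :=
  ⟨hv, 1, zero_le_one, by simp⟩

lemma isFaceOf_minFace (C : PointedCone R M) (v : M) : (minFace C v).IsFaceOf C := by
  refine .of_mem_of_add_mem_left (fun x hx => hx.1) ?_
  rintro x y hx hy ⟨-, t, ht, hxy⟩
  refine ⟨hx, t, ht, ?_⟩
  convert C.add_mem hxy hy using 1
  abel

lemma IsFaceOf.minFace_le (hF : F.IsFaceOf C) (hv : v ∈ F) : minFace C v ≤ F := by
  rintro x ⟨hx, t, ht, htx⟩
  exact hF.mem_of_add_mem_left hx htx (by simpa using F.smul_mem ht hv)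

lemma IsFaceOf.eq_minFace (hF : F.IsFaceOf C) (hv : v ∈ F)
    (hmin : ∀ F' : PointedCone R M, F'.IsFaceOf C → v ∈ F' → F ≤ F') : F = C.minFace v :=
  le_antisymm (hmin _ (isFaceOf_minFace C v) (mem_minFace_self (hF.le hv))) (hF.minFace_le hv)

lemma mapsTo_minFace {f : M →ₗ[R] M} (hf : Set.MapsTo f C C) (hfv : f v ∈ minFace C v) :
    Set.MapsTo f (minFace C v) (minFace C v) := by
  rintro x ⟨hx, t, ht, htx⟩
  obtain ⟨-, s, hs, hsv⟩ := hfv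
  refine ⟨hf hx, t * s, mul_nonneg ht hs, ?_⟩
  convert C.add_mem (C.smul_mem ht hsv) (hf htx) using 1
  simp only [map_sub, map_smul, smul_sub, smul_smul]
  abel

lemma IsFaceOf.smul_mem_of_smul_mem (hF : F.IsFaceOf C) (hv : v ∈ F) {c : R}
    (hc : c • v ∈ C) : c • v ∈ F := by
  rcases le_or_gt 0 c with h | h
  · exact F.smul_mem h hv
  · have hneg : (-c) • v ∈ F := F.smul_mem (neg_nonneg.mpr h.le) hv
    exact hF.mem_of_add_mem_left hc (hF.le hneg) (by simp)

lemma IsFaceOf.apply_mem_of_sum_eq_smul {ι : Type*} [Fintype ι] {f : ι → M →ₗ[R] M}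
    (hF : F.IsFaceOf C) (hv : v ∈ F) (hfv : ∀ i, f i v ∈ C) {c : R}
    (hsum : ∑ i, f i v = c • v) (i : ι) : f i v ∈ F :=
  hF.mem_of_sum_mem hfv (hsum ▸ hF.smul_mem_of_smul_mem hv (hsum ▸ sum_mem fun j _ => hfv j)) i

end PointedCone

section

variable {d : ℕ} {K Γ : Set (Fin d → ℝ)}

lemma IsProperCone.add_mem (hK : IsProperCone K) {x y : Fin d → ℝ} (hx : x ∈ K) (hy : y ∈ K) :
    x + y ∈ K := by
  have hmid : (1 / 2 : ℝ) • x + (1 / 2 : ℝ) • y ∈ K := hK.2.1 hx hy (by norm_num) (by norm_num)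
    (by norm_num)
  simpa [smul_add, smul_smul] using hK.2.2.1 _ hmid 2 zero_le_two

noncomputable def IsProperCone.toPointedCone (hK : IsProperCone K) : PointedCone ℝ (Fin d → ℝ) :=
  .ofSet K (hK.2.2.2.2.mono interior_subset) (fun _ hx _ hy => hK.add_mem hx hy) hK.2.2.1

noncomputable def IsFace.toPointedCone (hΓ : IsFace K Γ) (hne : Γ.Nonempty) :
    PointedCone ℝ (Fin d → ℝ) :=
  .ofSet Γ hne hΓ.2.2.1 hΓ.2.1

lemma isFace_iff_isFaceOf {C F : PointedCone ℝ (Fin d → ℝ)} :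
    IsFace (C : Set (Fin d → ℝ)) F ↔ F.IsFaceOf C := by
  refine ⟨fun hF => .of_mem_of_add_mem_left hF.1 fun hx hy hxy => (hF.2.2.2 _ hx _ hy hxy).1,
    fun hF => ⟨hF.le, fun _ hx _ ht => F.smul_mem ht hx, fun _ hx _ hy => F.add_mem hx hy,
      fun _ hx _ hy hxy => ⟨hF.mem_of_add_mem_left hx hy hxy, hF.mem_of_add_mem_right hx hy hxy⟩⟩⟩

end

theorem minimal_face_invariant_general {d m : ℕ}
    (𝒜 : Fin m → Matrix (Fin d) (Fin d) ℝ)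
    (K : Set (Fin d → ℝ))
    (hK : IsInvariantCone 𝒜 K)
    (v : Fin d → ℝ) (lam : ℝ)
    (heig : ((m : ℝ)⁻¹ • ∑ i, 𝒜 i).mulVec v = lam • v)
    (Γ : Set (Fin d → ℝ)) (hΓ : IsFace K Γ) (hvΓ : v ∈ Γ)
    (hmin : ∀ Γ' : Set (Fin d → ℝ), IsFace K Γ' → v ∈ Γ' → Γ ⊆ Γ') :
    ∀ i, ∀ x ∈ Γ, (𝒜 i).mulVec x ∈ Γ := by
  intro i
  let C := hK.1.toPointedCone
  let F := hΓ.toPointedCone ⟨v, hvΓ⟩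
  have hF : F.IsFaceOf C := isFace_iff_isFaceOf.mp hΓ
  have hF_eq : F = C.minFace v :=
    hF.eq_minFace hvΓ fun F' hF' hvF' => hmin F' (isFace_iff_isFaceOf.mpr hF') hvF'
  have hsum : ∑ j, (𝒜 j).mulVecLin v = ((m : ℝ) * lam) • v := by
    have hm : (m : ℝ) ≠ 0 := Nat.cast_ne_zero.mpr (Fin.pos i).ne'
    rw [Matrix.smul_mulVec, Matrix.sum_mulVec, inv_smul_eq_iff₀ hm, smul_smul] at heig
    simpa only [Matrix.mulVecLin_apply] using heig
  have hAv : (𝒜 i).mulVecLin v ∈ C.minFace v :=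
    hF_eq ▸ hF.apply_mem_of_sum_eq_smul hvΓ (fun j => hK.2 j v (hΓ.1 hvΓ)) hsum i
  change Set.MapsTo (𝒜 i).mulVecLin (F : Set (Fin d → ℝ)) F
  rw [hF_eq]
  exact PointedCone.mapsTo_minFace (hK.2 i) hAv

theorem minimal_face_invariant {d m : ℕ} (hm : 0 < m)
    (𝒜 : Fin m → Matrix (Fin d) (Fin d) ℝ)
    (hirr : IsIrreducibleFamily 𝒜) (K : Set (Fin d → ℝ))
    (hK : IsInvariantCone 𝒜 K)
    (v : Fin d → ℝ) (hv : v ∈ frontier K) (hv0 : v ≠ 0) (lam : ℝ)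
    (heig : ((m : ℝ)⁻¹ • ∑ i, 𝒜 i).mulVec v = lam • v)
    (Γ : Set (Fin d → ℝ)) (hΓ : IsFace K Γ) (hvΓ : v ∈ Γ)
    (hmin : ∀ Γ' : Set (Fin d → ℝ), IsFace K Γ' → v ∈ Γ' → Γ ⊆ Γ') :
    ∀ i, ∀ x ∈ Γ, (𝒜 i).mulVec x ∈ Γ :=
  minimal_face_invariant_general 𝒜 K hK v lam heig Γ hΓ hvΓ hmin
end

section
/- If an irreducible finite family 𝒜 of d×d real matrices possesses at least one proper invariant cone, then it possesses a minimal invariant cone K_min: a proper invariant cone such that for every proper invariant cone K' of 𝒜, either K_min ⊆ K' or K_min ⊆ −K'. -/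
open Matrix Set

/-!
Zorn's lemma gives a proper invariant cone `Kmin` minimal for inclusion: by irreducibility, the
intersection of a chain of proper invariant cones, or of two of them sharing a nonzero vector, is
again one, since the span of an invariant set containing a nonzero vector is everything. It then
suffices to show that two proper invariant cones `K₁`, `K₂` always share a nonzero vector up to
sign. Let `B = ∑ Aᵢ`. For nonzero `y ∈ K` the faces of `K` generated by the iterates `(1 + B)ⁿ y`
exhaust an invariant convex set, which therefore has interior, so some `(1 + B)ⁿ y` is interior
to `K`. A Collatz–Wielandt maximisation then yields eigenvectors `vᵢ ∈ Kᵢ` of `B` with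
eigenvalues `μ₁ ≤ μ₂`, say. If `K₁ ∩ -K₂ = {0}`, take `t₀` maximal with `v₁ - t₀ v₂ ∈ K₁`; if
`v₁ - t₀ v₂ ≠ 0`, some `(1 + B)ⁿ` pushes it into the interior of `K₁`, and since `v₂` grows at
least as fast as `v₁` under `1 + B`, this contradicts the maximality of `t₀`. So `v₁ = t₀ v₂ ∈ K₂`.
-/

open Topology

theorem exists_pos_sub_smul_mem_of_mem_interior {E : Type*} [AddCommGroup E] [Module ℝ E]
    [TopologicalSpace E] [IsTopologicalAddGroup E] [ContinuousSMul ℝ E] {K : Set E} {p : E}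
    (hp : p ∈ interior K) (v : E) : ∃ δ : ℝ, 0 < δ ∧ p - δ • v ∈ K := by
  have h : Filter.Tendsto (fun δ : ℝ => p - δ • v) (𝓝[>] 0) (𝓝 p) := by
    have : Continuous (fun δ : ℝ => p - δ • v) := by fun_prop
    simpa using (this.tendsto 0).mono_left nhdsWithin_le_nhds
  obtain ⟨δ, hδK, hδ⟩ :=
    ((h.eventually_mem (mem_interior_iff_mem_nhds.1 hp)).and self_mem_nhdsWithin).exists
  exact ⟨δ, hδ, hδK⟩

theorem exists_max_sub_smul_mem {E : Type*} [NormedAddCommGroup E] [NormedSpace ℝ E]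
    {K S : Set E} (hK : IsClosed K) (hsmul : ∀ x ∈ K, ∀ t : ℝ, 0 ≤ t → t • x ∈ K)
    (hS : IsCompact S) (hSK : ∀ x ∈ S, -x ∉ K) {f : E → E} (hf : Continuous f) {x₁ : E}
    (hx₁ : x₁ ∈ S) (hfx₁ : f x₁ ∈ K) :
    ∃ t₀ : ℝ, 0 ≤ t₀ ∧ ∃ x₀ ∈ S, f x₀ - t₀ • x₀ ∈ K ∧ ∀ t, ∀ x ∈ S, f x - t • x ∈ K → t ≤ t₀ := by
  obtain ⟨ε, hε, hεS⟩ : ∃ ε > 0, ∀ x ∈ S, ε ≤ Metric.infDist (-x) K :=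
    hS.exists_forall_le' (Metric.continuous_infDist_pt K |>.comp continuous_neg).continuousOn
      fun x hx => (hK.notMem_iff_infDist_pos ⟨_, hfx₁⟩).1 (hSK x hx)
  obtain ⟨C, hC⟩ := hS.exists_bound_of_continuousOn hf.continuousOn
  -- `t⁻¹ • f x - x ∈ K` lies within `‖f x‖ / t` of `-x`
  have hbound : ∀ t > 0, ∀ x ∈ S, f x - t • x ∈ K → t ≤ C / ε := by
    intro t ht x hx hmem
    have hmem' : t⁻¹ • f x - x ∈ K := by
      simpa [smul_sub, smul_smul, inv_mul_cancel₀ ht.ne'] using hsmul _ hmem t⁻¹ (by positivity)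
    have hdist := (hεS x hx).trans (Metric.infDist_le_dist_of_mem hmem')
    rw [dist_eq_norm, show -x - (t⁻¹ • f x - x) = -(t⁻¹ • f x) by abel, norm_neg, norm_smul,
      Real.norm_of_nonneg (by positivity)] at hdist
    rw [le_div_iff₀ hε]
    calc t * ε ≤ t * (t⁻¹ * ‖f x‖) := by gcongr
      _ = ‖f x‖ := by field_simp
      _ ≤ C := hC x hx
  set P := (Icc 0 (C / ε) ×ˢ S) ∩ {p : ℝ × E | f p.2 - p.1 • p.2 ∈ K}
  have hP : IsCompact P := (isCompact_Icc.prod hS).inter_right (hK.preimage (by fun_prop))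
  have h0P : (0, x₁) ∈ P :=
    ⟨⟨⟨le_rfl, div_nonneg ((norm_nonneg _).trans (hC x₁ hx₁)) hε.le⟩, hx₁⟩, by simpa⟩
  obtain ⟨⟨t₀, x₀⟩, ⟨⟨ht₀, hx₀⟩, hmem₀⟩, hmax⟩ :=
    hP.exists_isMaxOn ⟨_, h0P⟩ continuous_fst.continuousOn
  refine ⟨t₀, ht₀.1, x₀, hx₀, hmem₀, fun t x hx hmem => ?_⟩
  rcases le_or_gt t 0 with ht | ht
  · exact ht.trans ht₀.1
  · exact isMaxOn_iff.1 hmax (t, x) ⟨⟨⟨ht.le, hbound t ht x hx hmem⟩, hx⟩, hmem⟩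

theorem one_add_pow_apply_of_apply_eq_smul {R M : Type*} [CommRing R] [AddCommGroup M]
    [Module R M] {f : Module.End R M} {μ : R} {v : M} (hv : f v = μ • v) (n : ℕ) :
    ((1 + f) ^ n) v = (1 + μ) ^ n • v := by
  induction n with
  | zero => simp
  | succ n ih =>
    rw [pow_succ', Module.End.mul_apply, ih, map_smul, LinearMap.add_apply, Module.End.one_apply,
      hv]
    module

variable {d m : ℕ} {𝒜 : Fin m → Matrix (Fin d) (Fin d) ℝ} {K K₁ K₂ : Set (Fin d → ℝ)}
  {x y z : Fin d → ℝ}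

namespace IsProperCone

theorem smul_mem (hK : IsProperCone K) (hx : x ∈ K) {t : ℝ} (ht : 0 ≤ t) : t • x ∈ K :=
  hK.2.2.1 x hx t ht

theorem zero_mem (hK : IsProperCone K) : (0 : Fin d → ℝ) ∈ K := by
  simpa using hK.smul_mem (hK.2.2.2.2.mono interior_subset).some_mem le_rfl

theorem eq_zero_of_neg_mem (hK : IsProperCone K) (hx : x ∈ K) (hnx : -x ∈ K) : x = 0 := by
  have h : x ∈ K ∩ -K := ⟨hx, hnx⟩
  rwa [hK.2.2.2.1] at h

theorem add_mem_s5 (hK : IsProperCone K) (hx : x ∈ K) (hy : y ∈ K) : x + y ∈ K := by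
  simpa [← smul_add, smul_smul] using
    hK.smul_mem (hK.2.1 hx hy (by norm_num) (by norm_num) (add_halves 1)) zero_le_two

theorem sum_mem (hK : IsProperCone K) {ι : Type*} (s : Finset ι) {f : ι → Fin d → ℝ}
    (hf : ∀ i ∈ s, f i ∈ K) : ∑ i ∈ s, f i ∈ K :=
  Finset.sum_induction f (· ∈ K) (fun _ _ => hK.add_mem_s5) hK.zero_mem hf

theorem add_mem_interior (hK : IsProperCone K) (hx : x ∈ interior K) (hy : y ∈ K) :
    x + y ∈ interior K :=
  interior_maximal (image_subset_iff.2 fun _ hz => hK.add_mem_s5 (interior_subset hz) hy)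
    (isOpenMap_add_right y _ isOpen_interior) ⟨x, hx, rfl⟩

theorem smul_mem_interior (hK : IsProperCone K) (hx : x ∈ interior K) {c : ℝ} (hc : 0 < c) :
    c • x ∈ interior K :=
  interior_maximal (image_subset_iff.2 fun _ hz => hK.smul_mem (interior_subset hz) hc.le)
    (isOpenMap_smul₀ hc.ne' _ isOpen_interior) ⟨x, hx, rfl⟩

theorem zero_notMem_interior [Nontrivial (Fin d → ℝ)] (hK : IsProperCone K) :
    (0 : Fin d → ℝ) ∉ interior K := by
  intro h0
  obtain ⟨v, hv⟩ := exists_ne (0 : Fin d → ℝ)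
  obtain ⟨δ, hδ, hδv⟩ := exists_pos_sub_smul_mem_of_mem_interior h0 v
  obtain ⟨δ', hδ', hδ'v⟩ := exists_pos_sub_smul_mem_of_mem_interior h0 (-v)
  rw [zero_sub] at hδv
  rw [zero_sub, smul_neg, neg_neg] at hδ'v
  have hv' : δ • v ∈ K := by
    simpa [smul_smul, div_mul_cancel₀ δ hδ'.ne'] using hK.smul_mem hδ'v (div_pos hδ hδ').le
  exact hv (smul_eq_zero.1 (hK.eq_zero_of_neg_mem hv' hδv) |>.resolve_left hδ.ne')

theorem mem_interior_of_smul_mem_interior [Nontrivial (Fin d → ℝ)] (hK : IsProperCone K)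
    {c : ℝ} (hc : 0 ≤ c) (h : c • x ∈ interior K) : x ∈ interior K := by
  rcases hc.eq_or_lt with rfl | hc
  · exact absurd (by simpa using h) hK.zero_notMem_interior
  · simpa [smul_smul, inv_mul_cancel₀ hc.ne'] using hK.smul_mem_interior h (inv_pos.2 hc)

theorem exists_norm_eq_one [Nontrivial (Fin d → ℝ)] (hK : IsProperCone K) :
    ∃ x ∈ K, ‖x‖ = 1 := by
  obtain ⟨x, hx⟩ := hK.2.2.2.2
  have hx0 : x ≠ 0 := fun h => hK.zero_notMem_interior (h ▸ hx)
  exact ⟨_, hK.smul_mem (interior_subset hx) (inv_nonneg.2 (norm_nonneg x)),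
    norm_smul_inv_norm hx0⟩

theorem neg (hK : IsProperCone K) : IsProperCone (-K) := by
  refine ⟨hK.1.neg, hK.2.1.neg, fun x hx t ht => ?_, ?_, ?_⟩
  · simpa [Set.mem_neg] using hK.smul_mem hx ht
  · rw [neg_neg, inter_comm, hK.2.2.2.1]
  · obtain ⟨x, hx⟩ := hK.2.2.2.2
    refine ⟨-x, ?_⟩
    rw [← image_neg_eq_neg, ← Homeomorph.coe_neg, ← Homeomorph.image_interior]
    exact ⟨x, hx, rfl⟩

end IsProperCone

def generatedFace (K : Set (Fin d → ℝ)) (y : Fin d → ℝ) : Set (Fin d → ℝ) :=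
  {z ∈ K | ∃ c : ℝ, 0 ≤ c ∧ c • y - z ∈ K}

namespace IsProperCone

theorem zero_mem_generatedFace (hK : IsProperCone K) : (0 : Fin d → ℝ) ∈ generatedFace K y :=
  ⟨hK.zero_mem, 0, le_rfl, by simpa using hK.zero_mem⟩

theorem self_mem_generatedFace (hK : IsProperCone K) (hy : y ∈ K) : y ∈ generatedFace K y :=
  ⟨hy, 1, zero_le_one, by simpa using hK.zero_mem⟩

theorem convex_generatedFace (hK : IsProperCone K) : Convex ℝ (generatedFace K y) := by
  rintro z₁ ⟨hz₁, c₁, hc₁, h₁⟩ z₂ ⟨hz₂, c₂, hc₂, h₂⟩ a b ha hb hab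
  refine ⟨hK.2.1 hz₁ hz₂ ha hb hab, a * c₁ + b * c₂, by positivity, ?_⟩
  convert hK.2.1 h₁ h₂ ha hb hab using 1
  module

theorem generatedFace_mono (hK : IsProperCone K) {y' : Fin d → ℝ} (hy : y' - y ∈ K) :
    generatedFace K y ⊆ generatedFace K y' := by
  rintro z ⟨hz, c, hc, hcz⟩
  refine ⟨hz, c, hc, ?_⟩
  convert hK.add_mem_s5 (hK.smul_mem hy hc) hcz using 1
  module

theorem mem_interior_of_mem_generatedFace [Nontrivial (Fin d → ℝ)] (hK : IsProperCone K)
    (hz : z ∈ interior K) (hzy : z ∈ generatedFace K y) : y ∈ interior K := by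
  obtain ⟨-, c, hc, hcz⟩ := hzy
  refine hK.mem_interior_of_smul_mem_interior hc ?_
  simpa using hK.add_mem_interior hz hcz

end IsProperCone

noncomputable def sumEnd (𝒜 : Fin m → Matrix (Fin d) (Fin d) ℝ) : Module.End ℝ (Fin d → ℝ) :=
  ∑ i, (𝒜 i).mulVecLin

theorem sumEnd_apply (x : Fin d → ℝ) : sumEnd 𝒜 x = ∑ i, 𝒜 i *ᵥ x := by
  simp [sumEnd, LinearMap.sum_apply]

namespace IsInvariantCone

theorem sumEnd_mem (hK : IsInvariantCone 𝒜 K) (hx : x ∈ K) : sumEnd 𝒜 x ∈ K := by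
  rw [sumEnd_apply]
  exact hK.1.sum_mem _ fun i _ => hK.2 i x hx

theorem sumEnd_sub_mulVec_mem (hK : IsInvariantCone 𝒜 K) (hx : x ∈ K) (i : Fin m) :
    sumEnd 𝒜 x - 𝒜 i *ᵥ x ∈ K := by
  rw [sumEnd_apply, ← Finset.add_sum_erase _ _ (Finset.mem_univ i), add_sub_cancel_left]
  exact hK.1.sum_mem _ fun j _ => hK.2 j x hx

theorem one_add_sumEnd_pow_mem (hK : IsInvariantCone 𝒜 K) (hx : x ∈ K) (n : ℕ) :
    ((1 + sumEnd 𝒜) ^ n) x ∈ K := by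
  induction n with
  | zero => simpa using hx
  | succ n ih =>
    rw [pow_succ', Module.End.mul_apply, LinearMap.add_apply, Module.End.one_apply]
    exact hK.1.add_mem_s5 ih (hK.sumEnd_mem ih)

theorem mulVec_mem_generatedFace (hK : IsInvariantCone 𝒜 K) (hz : z ∈ generatedFace K y)
    (i : Fin m) : 𝒜 i *ᵥ z ∈ generatedFace K (y + sumEnd 𝒜 y) := by
  obtain ⟨hzK, c, hc, hcz⟩ := hz
  refine ⟨hK.2 i z hzK, c, hc, ?_⟩
  have h := hK.1.add_mem_s5 (hK.1.add_mem_s5 hcz (hK.sumEnd_mem hcz))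
    (hK.1.add_mem_s5 hzK (hK.sumEnd_sub_mulVec_mem hzK i))
  rw [map_sub, map_smul] at h
  convert h using 1
  module

theorem neg (hK : IsInvariantCone 𝒜 K) : IsInvariantCone 𝒜 (-K) :=
  ⟨hK.1.neg, fun i x hx => by simpa [Set.mem_neg, Matrix.mulVec_neg] using hK.2 i (-x) hx⟩

end IsInvariantCone

namespace IsIrreducibleFamily

theorem span_eq_top (hirr : IsIrreducibleFamily 𝒜) {S : Set (Fin d → ℝ)}
    (hS : ∀ i, ∀ x ∈ S, 𝒜 i *ᵥ x ∈ S) (hx : x ∈ S) (hx0 : x ≠ 0) :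
    Submodule.span ℝ S = ⊤ := by
  refine (hirr _ fun i z hz => ?_).resolve_left fun h => hx0 ?_
  · have hle : Submodule.span ℝ S ≤ (Submodule.span ℝ S).comap (𝒜 i).mulVecLin :=
      Submodule.span_le.2 fun w hw => Submodule.subset_span (hS i w hw)
    exact hle hz
  · simpa [h] using Submodule.subset_span (R := ℝ) hx

theorem interior_nonempty (hirr : IsIrreducibleFamily 𝒜) {S : Set (Fin d → ℝ)}
    (hconv : Convex ℝ S) (h0 : 0 ∈ S) (hS : ∀ i, ∀ x ∈ S, 𝒜 i *ᵥ x ∈ S) (hx : x ∈ S)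
    (hx0 : x ≠ 0) : (interior S).Nonempty := by
  rw [hconv.interior_nonempty_iff_affineSpan_eq_top,
    AffineSubspace.affineSpan_eq_top_iff_vectorSpan_eq_top_of_nonempty ℝ _ _ ⟨0, h0⟩,
    eq_top_iff, ← hirr.span_eq_top hS hx hx0]
  exact Submodule.span_le.2 fun w hw => by simpa using vsub_mem_vectorSpan ℝ hw h0

theorem isInvariantCone_of_subset (hirr : IsIrreducibleFamily 𝒜) (hK : IsProperCone K)
    {S : Set (Fin d → ℝ)} (hSK : S ⊆ K) (hclosed : IsClosed S) (hconv : Convex ℝ S)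
    (hsmul : ∀ x ∈ S, ∀ t : ℝ, 0 ≤ t → t • x ∈ S) (hS : ∀ i, ∀ x ∈ S, 𝒜 i *ᵥ x ∈ S)
    (hx : x ∈ S) (hx0 : x ≠ 0) : IsInvariantCone 𝒜 S := by
  have h0 : (0 : Fin d → ℝ) ∈ S := by simpa using hsmul x hx 0 le_rfl
  refine ⟨⟨hclosed, hconv, hsmul, ?_, hirr.interior_nonempty hconv h0 hS hx hx0⟩, hS⟩
  refine Subset.antisymm ?_ (singleton_subset_iff.2 ⟨h0, by simpa [Set.mem_neg] using h0⟩)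
  rw [← hK.2.2.2.1]
  exact inter_subset_inter hSK (neg_subset_neg.2 hSK)

theorem isInvariantCone_inter (hirr : IsIrreducibleFamily 𝒜) (h₁ : IsInvariantCone 𝒜 K₁)
    (h₂ : IsInvariantCone 𝒜 K₂) (hx : x ∈ K₁ ∩ K₂) (hx0 : x ≠ 0) :
    IsInvariantCone 𝒜 (K₁ ∩ K₂) :=
  hirr.isInvariantCone_of_subset h₁.1 inter_subset_left (h₁.1.1.inter h₂.1.1)
    (h₁.1.2.1.inter h₂.1.2.1) (fun _ hy _ ht => ⟨h₁.1.smul_mem hy.1 ht, h₂.1.smul_mem hy.2 ht⟩)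
    (fun i _ hy => ⟨h₁.2 i _ hy.1, h₂.2 i _ hy.2⟩) hx hx0

theorem isInvariantCone_sInter [Nontrivial (Fin d → ℝ)] (hirr : IsIrreducibleFamily 𝒜)
    {c : Set (Set (Fin d → ℝ))} (hc : ∀ K ∈ c, IsInvariantCone 𝒜 K)
    (hchain : IsChain (· ⊆ ·) c) (hne : c.Nonempty) : IsInvariantCone 𝒜 (⋂₀ c) := by
  obtain ⟨K, hK⟩ := hne
  have : Nonempty c := ⟨⟨K, hK⟩⟩
  obtain ⟨x, hx⟩ := IsCompact.nonempty_iInter_of_directed_nonempty_isCompact_isClosed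
    (fun L : c => (L : Set (Fin d → ℝ)) ∩ Metric.sphere 0 1)
    (fun L₁ L₂ => (hchain.total L₁.2 L₂.2).elim
      (fun h => ⟨L₁, subset_rfl, inter_subset_inter_left _ h⟩)
      (fun h => ⟨L₂, inter_subset_inter_left _ h, subset_rfl⟩))
    (fun L => by
      obtain ⟨x, hxL, hx⟩ := (hc L L.2).1.exists_norm_eq_one
      exact ⟨x, hxL, by simpa using hx⟩)
    (fun L => (isCompact_sphere 0 1).inter_left (hc L L.2).1.1)
    (fun L => (hc L L.2).1.1.inter Metric.isClosed_sphere)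
  rw [mem_iInter] at hx
  refine hirr.isInvariantCone_of_subset (hc K hK).1 (sInter_subset_of_mem hK)
    (isClosed_sInter fun L hL => (hc L hL).1.1) (convex_sInter fun L hL => (hc L hL).1.2.1)
    (fun y hy t ht => mem_sInter.2 fun L hL => (hc L hL).1.smul_mem (hy L hL) ht)
    (fun i y hy => mem_sInter.2 fun L hL => (hc L hL).2 i y (hy L hL))
    (mem_sInter.2 fun L hL => (hx ⟨L, hL⟩).1) (ne_zero_of_mem_unit_sphere ⟨x, (hx ⟨K, hK⟩).2⟩)

theorem exists_minimal_isInvariantCone [Nontrivial (Fin d → ℝ)] (hirr : IsIrreducibleFamily 𝒜)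
    (hK : IsInvariantCone 𝒜 K) : ∃ Kmin, Minimal (IsInvariantCone 𝒜) Kmin := by
  obtain ⟨Kmin, -, hKmin⟩ := zorn_superset_nonempty {K | IsInvariantCone 𝒜 K}
    (fun c hc hchain hne => ⟨⋂₀ c, hirr.isInvariantCone_sInter hc hchain hne,
      fun _ => sInter_subset_of_mem⟩) K hK
  exact ⟨Kmin, hKmin⟩

theorem exists_pow_apply_mem_interior [Nontrivial (Fin d → ℝ)] (hirr : IsIrreducibleFamily 𝒜)
    (hK : IsInvariantCone 𝒜 K) (hy : y ∈ K) (hy0 : y ≠ 0) :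
    ∃ n : ℕ, ((1 + sumEnd 𝒜) ^ n) y ∈ interior K := by
  set ys : ℕ → Fin d → ℝ := fun n => ((1 + sumEnd 𝒜) ^ n) y
  have hsucc : ∀ n, ys (n + 1) = ys n + sumEnd 𝒜 (ys n) := fun n => by
    simp only [ys, pow_succ', Module.End.mul_apply, LinearMap.add_apply, Module.End.one_apply]
  have hmono : Monotone fun n => generatedFace K (ys n) := monotone_nat_of_le_succ fun n =>
    hK.1.generatedFace_mono (by
      simpa [hsucc] using hK.sumEnd_mem (hK.one_add_sumEnd_pow_mem hy n))
  set S := ⋃ n, generatedFace K (ys n)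
  have hS : ∀ i, ∀ z ∈ S, 𝒜 i *ᵥ z ∈ S := by
    simp only [S, mem_iUnion]
    rintro i z ⟨n, hz⟩
    exact ⟨n + 1, hsucc n ▸ hK.mulVec_mem_generatedFace hz i⟩
  obtain ⟨z, hz⟩ := hirr.interior_nonempty (hmono.directed_le.convex_iUnion
      fun _ => hK.1.convex_generatedFace) (mem_iUnion.2 ⟨0, hK.1.zero_mem_generatedFace⟩) hS
    (mem_iUnion.2 ⟨0, hK.1.self_mem_generatedFace (by simpa [ys] using hy)⟩) hy0
  obtain ⟨n, hzn⟩ := mem_iUnion.1 (interior_subset hz)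
  have hzK : z ∈ interior K :=
    interior_mono (iUnion_subset fun n => sep_subset K _) hz
  exact ⟨n, hK.1.mem_interior_of_mem_generatedFace hzK hzn⟩

theorem exists_eigenvector [Nontrivial (Fin d → ℝ)] (hirr : IsIrreducibleFamily 𝒜)
    (hK : IsInvariantCone 𝒜 K) : ∃ v ∈ K, v ≠ 0 ∧ ∃ μ : ℝ, 0 ≤ μ ∧ sumEnd 𝒜 v = μ • v := by
  set B := sumEnd 𝒜
  set S := K ∩ Metric.sphere 0 1
  have hSK : ∀ x ∈ S, -x ∉ K := fun x hx hnx =>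
    ne_zero_of_mem_unit_sphere ⟨x, hx.2⟩ (hK.1.eq_zero_of_neg_mem hx.1 hnx)
  obtain ⟨x₁, hx₁K, hx₁⟩ := hK.1.exists_norm_eq_one
  obtain ⟨μ, hμ, x₀, hx₀, hmem, hmax⟩ := exists_max_sub_smul_mem hK.1.1 hK.1.2.2.1
    ((isCompact_sphere 0 1).inter_left hK.1.1) hSK B.continuous_of_finiteDimensional
    ⟨hx₁K, by simpa using hx₁⟩ (hK.sumEnd_mem hx₁K)
  refine ⟨x₀, hx₀.1, ne_zero_of_mem_unit_sphere ⟨x₀, hx₀.2⟩, μ, hμ, ?_⟩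
  by_contra hne
  obtain ⟨n, hn⟩ := hirr.exists_pow_apply_mem_interior hK hmem (sub_ne_zero.2 hne)
  set w := ((1 + B) ^ n) x₀
  have hcomm : Commute ((1 + B) ^ n) B := ((Commute.one_left B).add_left (.refl B)).pow_left n
  have hw : B w - μ • w ∈ interior K := by
    rwa [map_sub, map_smul, show ((1 + B) ^ n) (B x₀) = B w from LinearMap.congr_fun hcomm.eq x₀]
      at hn
  have hw0 : w ≠ 0 := fun h => hK.1.zero_notMem_interior (by simpa [h] using hw)
  -- `w / ‖w‖` beats the maximal `μ`
  obtain ⟨δ, hδ, hδw⟩ := exists_pos_sub_smul_mem_of_mem_interior hw w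
  have hδS : B (‖w‖⁻¹ • w) - (μ + δ) • (‖w‖⁻¹ • w) ∈ K := by
    convert hK.1.smul_mem hδw (inv_nonneg.2 (norm_nonneg w)) using 1
    rw [map_smul]
    module
  have := hmax _ _ ⟨hK.1.smul_mem (hK.one_add_sumEnd_pow_mem hx₀.1 n)
    (inv_nonneg.2 (norm_nonneg w)), by
      rw [mem_sphere_zero_iff_norm, norm_smul, norm_inv, norm_norm,
        inv_mul_cancel₀ (norm_ne_zero_iff.2 hw0)]⟩ hδS
  linarith

theorem exists_ne_zero_mem_inter_of_eigenvalue_le [Nontrivial (Fin d → ℝ)]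
    (hirr : IsIrreducibleFamily 𝒜) (h₁ : IsInvariantCone 𝒜 K₁) (h₂ : IsInvariantCone 𝒜 K₂)
    (hdisj : ∀ v ∈ K₁, -v ∈ K₂ → v = 0) {v₁ v₂ : Fin d → ℝ} {μ₁ μ₂ : ℝ}
    (hv₁ : v₁ ∈ K₁) (hv₁0 : v₁ ≠ 0) (hμ₁ : 0 ≤ μ₁) (he₁ : sumEnd 𝒜 v₁ = μ₁ • v₁)
    (hv₂ : v₂ ∈ K₂) (hv₂0 : v₂ ≠ 0) (he₂ : sumEnd 𝒜 v₂ = μ₂ • v₂) (hμ : μ₁ ≤ μ₂) :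
    ∃ v ∈ K₁ ∩ K₂, v ≠ 0 := by
  have hnv₂ : -v₂ ∉ K₁ := fun h => hv₂0 (neg_eq_zero.1 (hdisj _ h (by simpa using hv₂)))
  obtain ⟨t₀, ht₀, x₀, hx₀, hmem, hmax⟩ := exists_max_sub_smul_mem h₁.1.1 h₁.1.2.2.1
    isCompact_singleton (by simpa using hnv₂) (continuous_const (y := v₁)) rfl hv₁
  rw [mem_singleton_iff.1 hx₀] at hmem
  by_cases hy : v₁ - t₀ • v₂ = 0
  · exact ⟨v₁, ⟨hv₁, sub_eq_zero.1 hy ▸ h₂.1.smul_mem hv₂ ht₀⟩, hv₁0⟩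
  exfalso
  obtain ⟨n, hn⟩ := hirr.exists_pow_apply_mem_interior h₁ hmem hy
  -- `(1 + B)ⁿ (v₁ - t₀ v₂) = α (v₁ - s v₂)` with `s ≥ t₀`, as `v₂` grows faster than `v₁`
  set α := (1 + μ₁) ^ n
  set s := α⁻¹ * ((1 + μ₂) ^ n * t₀)
  have hα : 0 < α := by positivity
  have hts : t₀ ≤ s := by
    rw [le_inv_mul_iff₀ hα]
    exact mul_le_mul_of_nonneg_right (pow_le_pow_left₀ (by linarith) (by linarith) n) ht₀
  have hs : v₁ - s • v₂ ∈ interior K₁ := by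
    refine h₁.1.mem_interior_of_smul_mem_interior hα.le ?_
    convert hn using 1
    rw [map_sub, map_smul, one_add_pow_apply_of_apply_eq_smul he₁,
      one_add_pow_apply_of_apply_eq_smul he₂, smul_sub, smul_smul, smul_smul,
      mul_inv_cancel_left₀ hα.ne', mul_comm t₀]
  obtain ⟨δ, hδ, hδK⟩ := exists_pos_sub_smul_mem_of_mem_interior hs v₂
  have := hmax (s + δ) v₂ rfl (by rwa [add_smul, ← sub_sub])
  linarith

theorem exists_ne_zero_mem_inter_or_inter_neg [Nontrivial (Fin d → ℝ)]
    (hirr : IsIrreducibleFamily 𝒜) (h₁ : IsInvariantCone 𝒜 K₁) (h₂ : IsInvariantCone 𝒜 K₂) :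
    (∃ v ∈ K₁ ∩ K₂, v ≠ 0) ∨ ∃ v ∈ K₁ ∩ -K₂, v ≠ 0 := by
  obtain ⟨v₁, hv₁, hv₁0, μ₁, hμ₁, he₁⟩ := hirr.exists_eigenvector h₁
  obtain ⟨v₂, hv₂, hv₂0, μ₂, hμ₂, he₂⟩ := hirr.exists_eigenvector h₂
  by_contra! h
  obtain ⟨hpos, hneg⟩ := h
  rcases le_total μ₁ μ₂ with hμ | hμ
  · obtain ⟨v, hv, hv0⟩ := hirr.exists_ne_zero_mem_inter_of_eigenvalue_le h₁ h₂
      (fun v hv hnv => hneg v ⟨hv, hnv⟩) hv₁ hv₁0 hμ₁ he₁ hv₂ hv₂0 he₂ hμ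
    exact hv0 (hpos v hv)
  · obtain ⟨v, hv, hv0⟩ := hirr.exists_ne_zero_mem_inter_of_eigenvalue_le h₂ h₁
      (fun v hv hnv => neg_eq_zero.1 (hneg (-v) ⟨hnv, by simpa [Set.mem_neg] using hv⟩))
      hv₂ hv₂0 hμ₂ he₂ hv₁ hv₁0 he₁ hμ
    exact hv0 (hpos v hv.symm)

end IsIrreducibleFamily

theorem exists_minimal_invariant_cone_general {d m : ℕ}
    (𝒜 : Fin m → Matrix (Fin d) (Fin d) ℝ)
    (hirr : IsIrreducibleFamily 𝒜)
    (hex : ∃ K : Set (Fin d → ℝ), IsInvariantCone 𝒜 K) :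
    ∃ Kmin : Set (Fin d → ℝ), IsInvariantCone 𝒜 Kmin ∧
      ∀ K' : Set (Fin d → ℝ), IsInvariantCone 𝒜 K' → Kmin ⊆ K' ∨ Kmin ⊆ -K' := by
  obtain ⟨K₀, hK₀⟩ := hex
  cases subsingleton_or_nontrivial (Fin d → ℝ)
  · exact ⟨K₀, hK₀, fun K' hK' => .inl fun x _ => Subsingleton.elim 0 x ▸ hK'.1.zero_mem⟩
  obtain ⟨Kmin, hKmin⟩ := hirr.exists_minimal_isInvariantCone hK₀
  refine ⟨Kmin, hKmin.prop, fun K' hK' => ?_⟩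
  rcases hirr.exists_ne_zero_mem_inter_or_inter_neg hKmin.prop hK' with ⟨v, hv, hv0⟩ | ⟨v, hv, hv0⟩
  · exact .inl ((hKmin.2 (hirr.isInvariantCone_inter hKmin.prop hK' hv hv0)
      inter_subset_left).trans inter_subset_right)
  · exact .inr ((hKmin.2 (hirr.isInvariantCone_inter hKmin.prop hK'.neg hv hv0)
      inter_subset_left).trans inter_subset_right)

/-- An irreducible finite family with at least one proper invariant cone has a
minimal invariant cone: a proper invariant cone contained, up to sign, in every
proper invariant cone. -/
theorem exists_minimal_invariant_cone {d m : ℕ} (hm : 0 < m)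
    (𝒜 : Fin m → Matrix (Fin d) (Fin d) ℝ)
    (hirr : IsIrreducibleFamily 𝒜)
    (hex : ∃ K : Set (Fin d → ℝ), IsInvariantCone 𝒜 K) :
    ∃ Kmin : Set (Fin d → ℝ), IsInvariantCone 𝒜 Kmin ∧
      ∀ K' : Set (Fin d → ℝ), IsInvariantCone 𝒜 K' → Kmin ⊆ K' ∨ Kmin ⊆ -K' :=
  exists_minimal_invariant_cone_general 𝒜 hirr hex
end

section
/- Let v, v* be vectors in ℝ^d with (v*, v) > 0, ‖v*‖ > 0, and κ > 0. Then the matrix P = (v v^T)/(v*, v) + κ (I − (v* v*^T)/(v*, v*)) is symmetric positive definite and satisfies P v* = v. -/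
open Matrix

lemma vecMulVec_mulVec' {d : ℕ} (w u x : Fin d → ℝ) :
    vecMulVec w u *ᵥ x = (u ⬝ᵥ x) • w := by
  funext i
  simp [mulVec, dotProduct, vecMulVec_apply, Finset.mul_sum, mul_assoc, mul_comm, mul_left_comm]

/-- The matrix `P = (v vᵀ)/(v*, v) + κ (I - (v* v*ᵀ)/(v*, v*))` is symmetric
positive definite and maps `v*` to `v`. -/
theorem scaling_matrix_posdef {d : ℕ}
    (v vs : Fin d → ℝ) (hdot : 0 < vs ⬝ᵥ v) (hvs : vs ≠ 0)
    (κ : ℝ) (hκ : 0 < κ) :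
    ((vs ⬝ᵥ v)⁻¹ • vecMulVec v v +
        κ • (1 - (vs ⬝ᵥ vs)⁻¹ • vecMulVec vs vs)).mulVec vs = v ∧
    ((vs ⬝ᵥ v)⁻¹ • vecMulVec v v +
        κ • (1 - (vs ⬝ᵥ vs)⁻¹ • vecMulVec vs vs)).IsSymm ∧
    ((vs ⬝ᵥ v)⁻¹ • vecMulVec v v +
        κ • (1 - (vs ⬝ᵥ vs)⁻¹ • vecMulVec vs vs)).PosDef := by
  have hs : 0 < vs ⬝ᵥ vs := by
    rcases lt_or_eq_of_le (by simpa using dotProduct_self_star_nonneg vs : (0:ℝ) ≤ vs ⬝ᵥ vs) with h | h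
    · exact h
    · exact absurd (dotProduct_self_eq_zero.mp h.symm) hvs
  have hsymm : ((vs ⬝ᵥ v)⁻¹ • vecMulVec v v +
      κ • (1 - (vs ⬝ᵥ vs)⁻¹ • vecMulVec vs vs)).IsSymm := by
    unfold Matrix.IsSymm
    simp [transpose_add, transpose_smul, transpose_sub, vecMulVec_apply]
  refine ⟨?_, hsymm, ?_⟩
  · rw [add_mulVec, smul_mulVec, smul_mulVec, sub_mulVec, one_mulVec,
      smul_mulVec, vecMulVec_mulVec', vecMulVec_mulVec']
    rw [dotProduct_comm v vs]
    rw [smul_smul, smul_smul, inv_mul_cancel₀ hdot.ne', inv_mul_cancel₀ hs.ne']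
    simp
  · rw [posDef_iff_dotProduct_mulVec]
    constructor
    · rw [Matrix.IsHermitian]
      rw [conjTranspose_eq_transpose_of_trivial]
      exact hsymm
    · intro x hx
      have hst : star x = x := by simp
      rw [hst, add_mulVec, smul_mulVec, smul_mulVec, sub_mulVec, one_mulVec,
        smul_mulVec, vecMulVec_mulVec', vecMulVec_mulVec']
      simp only [dotProduct_add, dotProduct_smul, dotProduct_sub, smul_eq_mul]
      set a := v ⬝ᵥ x with ha
      set b := vs ⬝ᵥ x with hb
      set s := vs ⬝ᵥ vs with hsdef
      have hxa : x ⬝ᵥ v = a := dotProduct_comm x v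
      have hxb : x ⬝ᵥ vs = b := dotProduct_comm x vs
      rw [hxa, hxb]
      -- define w
      set w : Fin d → ℝ := x - (b / s) • vs with hw
      have hww : w ⬝ᵥ w = x ⬝ᵥ x - b ^ 2 / s := by
        rw [hw]
        simp only [sub_dotProduct, dotProduct_sub, smul_dotProduct, dotProduct_smul, smul_eq_mul]
        rw [dotProduct_comm x vs]
        simp only [← hb, ← hsdef]
        field_simp
        ring
      have hwnn : 0 ≤ w ⬝ᵥ w := by simpa using dotProduct_self_star_nonneg w
      rcases eq_or_ne w 0 with hw0 | hw0
      · -- x = (b/s) • vs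
        have hxeq : x = (b / s) • vs := by
          have := hw0
          rw [hw] at this
          linear_combination (norm := module) this
        have hbne : b / s ≠ 0 := by
          intro h
          apply hx
          rw [hxeq, h, zero_smul]
        have haeq : a = (b / s) * (vs ⬝ᵥ v) := by
          rw [ha, hxeq, dotProduct_smul, smul_eq_mul, dotProduct_comm v vs]
        have hxx : x ⬝ᵥ x - b ^ 2 / s = 0 := by
          rw [← hww, hw0]; simp
        have : x ⬝ᵥ x = b ^ 2 / s := by linarith
        have h3 : 0 < (b / s) ^ 2 * (vs ⬝ᵥ v) := by
          have : 0 < (b / s) ^ 2 := by positivity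
          exact mul_pos this hdot
        have e1 : (vs ⬝ᵥ v)⁻¹ * (a * a) = (b / s) ^ 2 * (vs ⬝ᵥ v) := by
          rw [haeq]; field_simp
        have e2 : x ⬝ᵥ x - s⁻¹ * (b * b) = 0 := by rw [← hxx]; ring
        have e3 : κ * (x ⬝ᵥ x - s⁻¹ * (b * b)) = 0 := by rw [e2, mul_zero]
        linarith [h3, e1, e3]
      · have hwpos : 0 < w ⬝ᵥ w := lt_of_le_of_ne hwnn (fun h => hw0 (dotProduct_self_eq_zero.mp h.symm))
        have key : 0 < x ⬝ᵥ x - b ^ 2 / s := by rw [← hww]; exact hwpos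
        have h1 : 0 ≤ (vs ⬝ᵥ v)⁻¹ * (a * a) :=
          mul_nonneg (le_of_lt (inv_pos.mpr hdot)) (mul_self_nonneg a)
        have h2 : s⁻¹ * (b * b) = b ^ 2 / s := by field_simp
        rw [h2]
        nlinarith [mul_pos hκ key]
end

section
/- Let 𝒜 be an irreducible finite family of d×d matrices, and let U be a set of nonzero vectors closed under the action of 𝒜 (i.e., AU ⊆ cone(U) for all A ∈ 𝒜). If no d+1 points of U are the vertices of a simplex containing the origin in its convex hull, then the set Q = ∩_{a∈U} {x : (x,a) ≤ 0} is a closed convex cone invariant under every A^T for A ∈ 𝒜, and by irreducibility the dual Q^* is a proper invariant cone for 𝒜; hence 𝒜 possesses a proper invariant cone. -/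
open Matrix Set

/-- The conic (convex) hull of a set of vectors. -/
def coneHull {d : ℕ} (U : Set (Fin d → ℝ)) : Set (Fin d → ℝ) :=
  convexHull ℝ {x | ∃ u ∈ U, ∃ t : ℝ, 0 ≤ t ∧ x = t • u}

def dualConeSet {d : ℕ} (K : Set (Fin d → ℝ)) : Set (Fin d → ℝ) :=
  {x | ∀ y ∈ K, 0 ≤ x ⬝ᵥ y}

/-- The polar set `Q = ∩_{a ∈ U} {x : (x,a) ≤ 0}`. -/
def polarSet {d : ℕ} (U : Set (Fin d → ℝ)) : Set (Fin d → ℝ) :=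
  {x | ∀ a ∈ U, x ⬝ᵥ a ≤ 0}

/-!
By Carathéodory, the simplex condition says exactly that `0 ∉ conv U`. Hence `U` lies weakly on one
side of a hyperplane, i.e. `Q = polarSet U` is a nonzero closed convex cone, and `Aᵀ Q ⊆ Q` because
`A U ⊆ cone U`. Irreducibility is used twice. The lineality space `K ∩ -K` of `K = Q^*` is the
orthogonal complement of `Q`, an `𝒜`-invariant subspace which is not everything since `Q ≠ 0`; so
`K` is pointed. The span of `U` is an `𝒜`-invariant nonzero subspace, hence everything, so `Q` is
pointed too. Finally, if `K` had empty interior it would lie in a hyperplane `v^⊥`, and then `±v`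
would lie in `K^* = Q` (a triple dual equals the single dual), contradicting pointedness of `Q`.
-/

section DotProduct

variable {n : Type*} [Fintype n]

theorem exists_ne_zero_dotProduct_eq_zero_of_ne_top [DecidableEq n] {W : Submodule ℝ (n → ℝ)}
    (hW : W ≠ ⊤) : ∃ v ≠ 0, ∀ w ∈ W, v ⬝ᵥ w = 0 := by
  obtain ⟨f, hf0, hfW⟩ := Submodule.exists_dual_map_eq_bot_of_lt_top hW.lt_top inferInstance
  refine ⟨(dotProductEquiv ℝ n).symm f, by simpa using hf0, fun w hw => ?_⟩
  rw [← dotProductEquiv_apply_apply, LinearEquiv.apply_symm_apply]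
  simpa [hfW] using Submodule.mem_map_of_mem (f := f) hw

theorem Convex.exists_ne_zero_dotProduct_eq_of_interior_eq_empty {C : Set (n → ℝ)}
    (hC : Convex ℝ C) (hne : C.Nonempty) (hint : interior C = ∅) :
    ∃ v ≠ 0, ∃ b : ℝ, ∀ x ∈ C, v ⬝ᵥ x = b := by
  classical
  obtain ⟨c, hc⟩ := hne
  have hspan : vectorSpan ℝ C ≠ ⊤ := by
    rw [Ne, ← AffineSubspace.affineSpan_eq_top_iff_vectorSpan_eq_top_of_nonempty ℝ _ _ ⟨c, hc⟩,
      ← hC.interior_nonempty_iff_affineSpan_eq_top, hint]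
    exact Set.not_nonempty_empty
  obtain ⟨v, hv0, hv⟩ := exists_ne_zero_dotProduct_eq_zero_of_ne_top hspan
  refine ⟨v, hv0, v ⬝ᵥ c, fun x hx => ?_⟩
  rw [← sub_eq_zero, ← dotProduct_sub]
  exact hv _ (vsub_mem_vectorSpan ℝ hx hc)

theorem transpose_mulVec_dotProduct (A : Matrix n n ℝ) (x y : n → ℝ) :
    Aᵀ *ᵥ x ⬝ᵥ y = x ⬝ᵥ A *ᵥ y := by
  rw [mulVec_transpose, dotProduct_mulVec]

def dotOrthogonal (S : Set (n → ℝ)) : Submodule ℝ (n → ℝ) where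
  carrier := {x | ∀ y ∈ S, x ⬝ᵥ y = 0}
  add_mem' hx hx' y hy := by rw [add_dotProduct, hx y hy, hx' y hy, add_zero]
  zero_mem' y _ := zero_dotProduct y
  smul_mem' c x hx y hy := by rw [smul_dotProduct, hx y hy, smul_zero]

theorem dotOrthogonal_eq_bot_of_span_eq_top {S : Set (n → ℝ)}
    (h : Submodule.span ℝ S = ⊤) : dotOrthogonal S = ⊥ := by
  refine (Submodule.eq_bot_iff _).2 fun x hx => dotProduct_self_eq_zero.1 ?_
  have hker : Submodule.span ℝ S ≤ LinearMap.ker (dotProductBilin ℝ ℝ x) :=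
    Submodule.span_le.2 hx
  exact hker (h ▸ Submodule.mem_top)

end DotProduct

theorem exists_fin_of_mem_convexHull {𝕜 E : Type*}
    [Field 𝕜] [LinearOrder 𝕜] [IsStrictOrderedRing 𝕜] [AddCommGroup E] [Module 𝕜 E]
    [FiniteDimensional 𝕜 E] {s : Set E} {x : E}
    (hx : x ∈ convexHull 𝕜 s) {k : ℕ} (hk : Module.finrank 𝕜 E < k) :
    ∃ f : Fin k → E, (∀ i, f i ∈ s) ∧ x ∈ convexHull 𝕜 (range f) := by
  rw [convexHull_eq_union] at hx
  simp only [mem_iUnion] at hx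
  obtain ⟨t, hts, ht_indep, hxt⟩ := hx
  have : Nonempty t := (convexHull_nonempty_iff.1 ⟨x, hxt⟩).to_subtype
  obtain ⟨e⟩ : Nonempty (t ↪ Fin k) := Function.Embedding.nonempty_of_card_le <| by
    simpa using ht_indep.card_le_finrank_succ.trans (Nat.succ_le_of_lt
      ((Submodule.finrank_le _).trans_lt hk))
  refine ⟨Subtype.val ∘ Function.invFun e, fun i => hts (Function.invFun e i).2, ?_⟩
  rwa [(Function.invFun_surjective e.injective).range_comp, Subtype.range_coe]

theorem zero_notMem_convexHull_of_not_exists_fin {d : ℕ} {U : Set (Fin d → ℝ)}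
    (hU : ¬ ∃ f : Fin (d + 1) → (Fin d → ℝ),
      (∀ k, f k ∈ U) ∧ (0 : Fin d → ℝ) ∈ convexHull ℝ (Set.range f)) :
    (0 : Fin d → ℝ) ∉ convexHull ℝ U := fun h0 =>
  hU (exists_fin_of_mem_convexHull h0 (by simp))

section Cones

variable {d : ℕ}

theorem isClosed_dualConeSet (S : Set (Fin d → ℝ)) : IsClosed (dualConeSet S) := by
  simp only [dualConeSet, Set.ofPred_forall]
  exact isClosed_biInter fun y _ =>
    isClosed_le continuous_const (continuous_id.dotProduct continuous_const)

theorem convex_dualConeSet (S : Set (Fin d → ℝ)) : Convex ℝ (dualConeSet S) := by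
  intro x hx y hy a b ha hb _ z hz
  simp only [add_dotProduct, smul_dotProduct, smul_eq_mul]
  exact add_nonneg (mul_nonneg ha (hx z hz)) (mul_nonneg hb (hy z hz))

theorem smul_mem_dualConeSet {S : Set (Fin d → ℝ)} {x : Fin d → ℝ} (hx : x ∈ dualConeSet S)
    {t : ℝ} (ht : 0 ≤ t) : t • x ∈ dualConeSet S := fun y hy => by
  rw [smul_dotProduct, smul_eq_mul]
  exact mul_nonneg ht (hx y hy)

theorem zero_mem_dualConeSet (S : Set (Fin d → ℝ)) : 0 ∈ dualConeSet S := fun y _ => by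
  rw [zero_dotProduct]

theorem subset_dualConeSet_dualConeSet (S : Set (Fin d → ℝ)) :
    S ⊆ dualConeSet (dualConeSet S) := fun x hx y hy => by
  rw [dotProduct_comm]
  exact hy x hx

theorem dualConeSet_anti {S T : Set (Fin d → ℝ)} (h : S ⊆ T) : dualConeSet T ⊆ dualConeSet S :=
  fun _ hx y hy => hx y (h hy)

@[simp]
theorem dualConeSet_dualConeSet_dualConeSet (S : Set (Fin d → ℝ)) :
    dualConeSet (dualConeSet (dualConeSet S)) = dualConeSet S :=
  (dualConeSet_anti (subset_dualConeSet_dualConeSet S)).antisymm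
    (subset_dualConeSet_dualConeSet _)

theorem mulVec_mem_dualConeSet {S : Set (Fin d → ℝ)} {A : Matrix (Fin d) (Fin d) ℝ}
    (hA : ∀ y ∈ S, Aᵀ *ᵥ y ∈ S) {x : Fin d → ℝ} (hx : x ∈ dualConeSet S) :
    A *ᵥ x ∈ dualConeSet S := fun y hy => by
  rw [← transpose_transpose A, transpose_mulVec_dotProduct]
  exact hx _ (hA y hy)

theorem polarSet_eq_dualConeSet_neg (U : Set (Fin d → ℝ)) : polarSet U = dualConeSet (-U) := by
  ext x
  simp [polarSet, dualConeSet]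

theorem coneHull_subset_polarSet_polarSet (U : Set (Fin d → ℝ)) :
    coneHull U ⊆ polarSet (polarSet U) := by
  refine convexHull_min ?_ ?_
  · rintro _ ⟨u, hu, t, ht, rfl⟩ x hx
    rw [smul_dotProduct, smul_eq_mul, dotProduct_comm]
    exact mul_nonpos_of_nonneg_of_nonpos ht (hx u hu)
  · rw [polarSet_eq_dualConeSet_neg]
    exact convex_dualConeSet _

theorem transpose_mulVec_mem_polarSet {U : Set (Fin d → ℝ)} {A : Matrix (Fin d) (Fin d) ℝ}
    (hA : ∀ u ∈ U, A *ᵥ u ∈ coneHull U) {x : Fin d → ℝ} (hx : x ∈ polarSet U) :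
    Aᵀ *ᵥ x ∈ polarSet U := fun a ha => by
  rw [transpose_mulVec_dotProduct, dotProduct_comm]
  exact coneHull_subset_polarSet_polarSet U (hA a ha) x hx

theorem dualConeSet_inter_neg (S : Set (Fin d → ℝ)) :
    dualConeSet S ∩ -dualConeSet S = dotOrthogonal S := by
  ext x
  refine ⟨fun ⟨hx, hnx⟩ y hy => le_antisymm ?_ (hx y hy), fun hx => ⟨?_, ?_⟩⟩
  · simpa using hnx y hy
  · exact fun y hy => (hx y hy).ge
  · exact fun y hy => by simp [hx y hy]

theorem interior_dualConeSet_dualConeSet_nonempty {S : Set (Fin d → ℝ)}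
    (hS : dualConeSet S ∩ -dualConeSet S = {0}) :
    (interior (dualConeSet (dualConeSet S))).Nonempty := by
  rw [Set.nonempty_iff_ne_empty]
  intro hint
  obtain ⟨v, hv0, b, hv⟩ :=
    (convex_dualConeSet _).exists_ne_zero_dotProduct_eq_of_interior_eq_empty
      ⟨0, zero_mem_dualConeSet _⟩ hint
  obtain rfl : b = 0 := by simpa using (hv 0 (zero_mem_dualConeSet _)).symm
  have hvS : v ∈ dualConeSet S ∩ -dualConeSet S := by
    rw [← dualConeSet_dualConeSet_dualConeSet S, dualConeSet_inter_neg]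
    exact hv
  exact hv0 (by simpa [hS] using hvS)

theorem polarSet_inter_neg_eq_zero {U : Set (Fin d → ℝ)} (hU : Submodule.span ℝ U = ⊤) :
    polarSet U ∩ -polarSet U = {0} := by
  rw [polarSet_eq_dualConeSet_neg, dualConeSet_inter_neg, dotOrthogonal_eq_bot_of_span_eq_top]
  · rfl
  · rw [Submodule.span_neg_eq_neg, hU, Submodule.neg_top]

theorem coneHull_subset_span (U : Set (Fin d → ℝ)) : coneHull U ⊆ Submodule.span ℝ U :=
  convexHull_min
    (by rintro _ ⟨u, hu, t, -, rfl⟩; exact Submodule.smul_mem _ t (Submodule.subset_span hu))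
    (Submodule.span ℝ U).convex

theorem exists_ne_zero_mem_polarSet {U : Set (Fin d → ℝ)} (hne : U.Nonempty)
    (h0 : (0 : Fin d → ℝ) ∉ convexHull ℝ U) : ∃ x ∈ polarSet U, x ≠ 0 := by
  have hC := convex_convexHull ℝ U
  rcases (interior (convexHull ℝ U)).eq_empty_or_nonempty with hint | hint
  · obtain ⟨v, hv0, b, hv⟩ :=
      hC.exists_ne_zero_dotProduct_eq_of_interior_eq_empty hne.convexHull hint
    have hvU : ∀ a ∈ U, v ⬝ᵥ a = b := fun a ha => hv a (subset_convexHull ℝ U ha)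
    rcases le_total b 0 with hb | hb
    · exact ⟨v, fun a ha => (hvU a ha).trans_le hb, hv0⟩
    · exact ⟨-v, fun a ha => by rw [neg_dotProduct, hvU a ha]; linarith, neg_ne_zero.2 hv0⟩
  · obtain ⟨f, hf0, hf⟩ := geometric_hahn_banach_of_nonempty_interior_point hC
      (fun h => h0 (interior_subset h)) hint
    refine ⟨(dotProductEquiv ℝ (Fin d)).symm f.toLinearMap, fun a ha => ?_,
      by simpa using ContinuousLinearMap.coe_injective.ne hf0⟩
    rw [← dotProductEquiv_apply_apply, LinearEquiv.apply_symm_apply]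
    simpa using hf a (subset_convexHull ℝ U ha)

end Cones

section Irreducible

variable {d m : ℕ} {𝒜 : Fin m → Matrix (Fin d) (Fin d) ℝ}

theorem IsIrreducibleFamily.span_eq_top_s18 (hirr : IsIrreducibleFamily 𝒜) {U : Set (Fin d → ℝ)}
    (hU : ∀ i, ∀ u ∈ U, 𝒜 i *ᵥ u ∈ Submodule.span ℝ U) (hne : ∃ u ∈ U, u ≠ 0) :
    Submodule.span ℝ U = ⊤ := by
  refine (hirr _ fun i x hx => ?_).resolve_left fun h => ?_
  · exact (Submodule.span_le (p := (Submodule.span ℝ U).comap (𝒜 i).mulVecLin)).2 (hU i) hx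
  · obtain ⟨u, hu, hu0⟩ := hne
    exact hu0 (Submodule.span_eq_bot.1 h u hu)

theorem IsIrreducibleFamily.dotOrthogonal_eq_bot (hirr : IsIrreducibleFamily 𝒜)
    {Q : Set (Fin d → ℝ)} (hQ : ∀ i, ∀ y ∈ Q, (𝒜 i)ᵀ *ᵥ y ∈ Q) (hne : ∃ y ∈ Q, y ≠ 0) :
    dotOrthogonal Q = ⊥ := by
  refine (hirr (dotOrthogonal Q) fun i x hx y hy => ?_).resolve_right fun htop => ?_
  · rw [← transpose_transpose (𝒜 i), transpose_mulVec_dotProduct]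
    exact hx _ (hQ i y hy)
  · obtain ⟨y, hy, hy0⟩ := hne
    exact hy0 (dotProduct_self_eq_zero.1 ((Submodule.eq_top_iff'.1 htop y) y hy))

end Irreducible

theorem helly_invariant_cone_general {d m : ℕ}
    (𝒜 : Fin m → Matrix (Fin d) (Fin d) ℝ)
    (hirr : IsIrreducibleFamily 𝒜)
    (U : Set (Fin d → ℝ)) (hUne : U.Nonempty)
    (hUclosed : ∀ i, ∀ u ∈ U, (𝒜 i).mulVec u ∈ coneHull U)
    (hnosimplex : ¬ ∃ f : Fin (d + 1) → (Fin d → ℝ),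
      (∀ k, f k ∈ U) ∧ (0 : Fin d → ℝ) ∈ convexHull ℝ (Set.range f)) :
    (IsClosed (polarSet U) ∧ Convex ℝ (polarSet U) ∧
      (∀ x ∈ polarSet U, ∀ t : ℝ, 0 ≤ t → t • x ∈ polarSet U) ∧
      (∀ i, ∀ x ∈ polarSet U, (𝒜 i)ᵀ.mulVec x ∈ polarSet U)) ∧
    IsInvariantCone 𝒜 (dualConeSet (polarSet U)) ∧
    ∃ K : Set (Fin d → ℝ), IsInvariantCone 𝒜 K := by
  have h0 := zero_notMem_convexHull_of_not_exists_fin hnosimplex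
  have hQ_inv (i) : ∀ x ∈ polarSet U, (𝒜 i)ᵀ *ᵥ x ∈ polarSet U :=
    fun _ => transpose_mulVec_mem_polarSet (hUclosed i)
  have hspan : Submodule.span ℝ U = ⊤ := by
    obtain ⟨u, hu⟩ := hUne
    refine hirr.span_eq_top_s18 (fun i u hu => coneHull_subset_span U (hUclosed i u hu)) ⟨u, hu, ?_⟩
    rintro rfl
    exact h0 (subset_convexHull ℝ U hu)
  have hK : IsInvariantCone 𝒜 (dualConeSet (polarSet U)) := by
    refine ⟨⟨isClosed_dualConeSet _, convex_dualConeSet _,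
      fun x hx t ht => smul_mem_dualConeSet hx ht, ?_, ?_⟩,
      fun i x hx => mulVec_mem_dualConeSet (hQ_inv i) hx⟩
    · rw [dualConeSet_inter_neg,
        hirr.dotOrthogonal_eq_bot hQ_inv (exists_ne_zero_mem_polarSet hUne h0)]
      rfl
    · have hQ := polarSet_inter_neg_eq_zero hspan
      rw [polarSet_eq_dualConeSet_neg] at hQ ⊢
      exact interior_dualConeSet_dualConeSet_nonempty hQ
  refine ⟨?_, hK, _, hK⟩
  rw [polarSet_eq_dualConeSet_neg] at hQ_inv ⊢
  exact ⟨isClosed_dualConeSet _, convex_dualConeSet _, fun x hx t ht => smul_mem_dualConeSet hx ht,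
    hQ_inv⟩

/-- If no `d+1` points of `U` span a simplex whose convex hull contains the
origin, then `Q = polarSet U` is a closed convex cone invariant under the
transposed family, its dual is a proper invariant cone for `𝒜`, and hence `𝒜`
possesses a proper invariant cone. -/
theorem helly_invariant_cone {d m : ℕ} (hm : 0 < m)
    (𝒜 : Fin m → Matrix (Fin d) (Fin d) ℝ)
    (hirr : IsIrreducibleFamily 𝒜)
    (U : Set (Fin d → ℝ)) (hUne : U.Nonempty) (hU0 : (0 : Fin d → ℝ) ∉ U)
    (hUclosed : ∀ i, ∀ u ∈ U, (𝒜 i).mulVec u ∈ coneHull U)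
    (hnosimplex : ¬ ∃ f : Fin (d + 1) → (Fin d → ℝ),
      (∀ k, f k ∈ U) ∧ (0 : Fin d → ℝ) ∈ convexHull ℝ (Set.range f)) :
    (IsClosed (polarSet U) ∧ Convex ℝ (polarSet U) ∧
      (∀ x ∈ polarSet U, ∀ t : ℝ, 0 ≤ t → t • x ∈ polarSet U) ∧
      (∀ i, ∀ x ∈ polarSet U, (𝒜 i)ᵀ.mulVec x ∈ polarSet U)) ∧
    IsInvariantCone 𝒜 (dualConeSet (polarSet U)) ∧
    ∃ K : Set (Fin d → ℝ), IsInvariantCone 𝒜 K :=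
  helly_invariant_cone_general 𝒜 hirr U hUne hUclosed hnosimplex
end
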